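/- Let X and Y be Banach spaces and let G ∈ L(X,Y) with ‖G‖ = 1. Define C := { ψ ∈ B_{L(X,Y)*} : there exists a net (x_α, y_α*) in S_X × S_{Y*} with ‖G x_α‖ → 1 and ψ_{x_α, y_α*} → ψ in the weak* topology }. Then the set { φ ∈ L(X,Y)* : |φ(T)| ≤ ‖T‖_G for all T ∈ L(X,Y) } (i.e., the unit ball of the dual of (L(X,Y), ‖·‖_G)) equals the weak*-closed convex hull of C. -/

import Mathlib

/-!
The functionals dominated by `‖·‖_G` form a weak*-closed convex set containing `C`: a limit of
`ψ_{x_α, y_α*}` is bounded at `T` by `‖T x_α‖` with `‖G x_α‖` close to `1`. Conversely, the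
weak*-continuous functionals on `L(X,Y)*` are the evaluations at operators `T`, so by Hahn–Banach
separation it suffices that `sup_{ψ ∈ C} Re ψ(T) ≥ ‖T‖_G`. Such `ψ` is a weak* cluster point
(Banach–Alaoglu) of `ψ_{x_n, y_n*}`, where `x_n` almost attains `‖T‖_G` among unit vectors with
`‖G x_n‖ > 1 - 1/(n+1)` and `y_n*` norms `T x_n`.
-/

open Filter Topology

universe u v w

variable {𝕜 : Type u} [RCLike 𝕜]

/-- The `G`-norm of an operator `T`:
`‖T‖_G := inf_{δ>0} sup {‖Tx‖ : x ∈ S_X, ‖Gx‖ > 1 - δ}`. -/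
noncomputable def Gnorm {X Y : Type*} [NormedAddCommGroup X] [NormedSpace 𝕜 X]
    [NormedAddCommGroup Y] [NormedSpace 𝕜 Y] (G T : X →L[𝕜] Y) : ℝ :=
  ⨅ δ : {δ : ℝ // 0 < δ},
    sSup {r : ℝ | ∃ x : X, ‖x‖ = 1 ∧ 1 - (δ : ℝ) < ‖G x‖ ∧ r = ‖T x‖}

/-- The set `C` of functionals `ψ` in the unit ball of `L(X,Y)*` that are weak* limits
of a net of functionals `ψ_{x_α, y_α*} = y_α* ⊗ x_α` with `x_α ∈ S_X`, `y_α* ∈ S_{Y*}`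
and `‖G x_α‖ → 1`. -/
def Cset {X : Type v} {Y : Type w} [NormedAddCommGroup X] [NormedSpace 𝕜 X]
    [NormedAddCommGroup Y] [NormedSpace 𝕜 Y] (G : X →L[𝕜] Y) :
    Set ((X →L[𝕜] Y) →L[𝕜] 𝕜) :=
  {ψ | ‖ψ‖ ≤ 1 ∧ ∃ (ι : Type (max u v w)) (l : Filter ι), l.NeBot ∧
    ∃ (x : ι → X) (y : ι → (Y →L[𝕜] 𝕜)),
      (∀ i, ‖x i‖ = 1) ∧ (∀ i, ‖y i‖ = 1) ∧
      Tendsto (fun i => ‖G (x i)‖) l (𝓝 1) ∧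
      (∀ S : X →L[𝕜] Y, Tendsto (fun i => (y i) (S (x i))) l (𝓝 (ψ S)))}

namespace WeakDual

variable {E : Type*} [AddCommGroup E] [TopologicalSpace E] [Module 𝕜 E]

instance : IsScalarTower ℝ 𝕜 (WeakDual 𝕜 E) := inferInstanceAs (IsScalarTower ℝ 𝕜 (E →L[𝕜] 𝕜))

instance : LocallyConvexSpace ℝ (WeakDual 𝕜 E) := WeakBilin.locallyConvexSpace

theorem closure_convexHull_eq_setOf_norm_apply_le {C : Set (WeakDual 𝕜 E)} {p : E → ℝ}
    (hCp : ∀ ψ ∈ C, ∀ e, ‖ψ e‖ ≤ p e) (hpC : ∀ e, ∀ c < p e, ∃ ψ ∈ C, c ≤ RCLike.re (ψ e)) :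
    closure (convexHull ℝ C) = {φ | ∀ e, ‖φ e‖ ≤ p e} := by
  refine subset_antisymm (closure_minimal (convexHull_min hCp ?_) ?_) fun φ hφ => ?_
  · intro φ hφ ψ hψ a b ha hb hab e
    calc ‖a • φ e + b • ψ e‖ ≤ a * ‖φ e‖ + b * ‖ψ e‖ := by
          simpa [norm_smul, abs_of_nonneg ha, abs_of_nonneg hb] using
            norm_add_le (a • φ e) (b • ψ e)
      _ ≤ a * p e + b * p e := by gcongr; exacts [hφ e, hψ e]
      _ = p e := by rw [← add_mul, hab, one_mul]
  · simp only [Set.ofPred_forall]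
    exact isClosed_iInter fun e => isClosed_le (eval_continuous e).norm continuous_const
  · by_contra hφC
    obtain ⟨f, u, hfC, hfφ⟩ := RCLike.geometric_hahn_banach_closed_point (𝕜 := 𝕜)
      (convex_convexHull ℝ C).closure isClosed_closure hφC
    obtain ⟨e, rfl⟩ := LinearMap.dualEmbedding_surjective (topDualPairing 𝕜 E) f
    have hpu : p e ≤ u := le_of_not_gt fun hu => by
      obtain ⟨ψ, hψ, hle⟩ := hpC e u hu
      exact (hle.trans_lt (hfC ψ (subset_closure (subset_convexHull ℝ C hψ)))).false
    exact (hfφ.trans_le ((RCLike.re_le_norm _).trans ((hφ e).trans hpu))).false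

end WeakDual

theorem ContinuousLinearMap.exists_norm_eq_one_lt_norm_apply {E F : Type*}
    [NormedAddCommGroup E] [NormedSpace 𝕜 E] [NormedAddCommGroup F] [NormedSpace 𝕜 F]
    (f : E →L[𝕜] F) (hf : 0 < ‖f‖) {r : ℝ} (hr : r < ‖f‖) : ∃ x : E, ‖x‖ = 1 ∧ r < ‖f x‖ := by
  obtain ⟨x, hx, hfx⟩ := f.exists_nnnorm_eq_one_lt_apply_of_lt_opNNNorm
    (norm_toNNReal (a := f) ▸ (Real.toNNReal_lt_toNNReal_iff hf).2 hr)
  exact ⟨x, congrArg NNReal.toReal hx, (Real.le_coe_toNNReal r).trans_lt hfx⟩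

theorem StrongDual.exists_tendsto_apply_of_norm_le {E ι : Type*} [NormedAddCommGroup E]
    [NormedSpace 𝕜 E] (l : Ultrafilter ι) {f : ι → StrongDual 𝕜 E} {r : ℝ}
    (hf : ∀ i, ‖f i‖ ≤ r) :
    ∃ φ : StrongDual 𝕜 E, ‖φ‖ ≤ r ∧ ∀ e, Tendsto (fun i => f i e) l (𝓝 (φ e)) := by
  obtain ⟨φ, hφ, hlim⟩ :=
    (WeakDual.isCompact_closedBall (0 : StrongDual 𝕜 E) r).ultrafilter_le_nhds
      (l.map (toWeakDual ∘ f))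
      (le_principal_iff.2 (mem_map.2 (univ_mem' fun i => by simpa using hf i)))
  refine ⟨WeakDual.toStrongDual φ, by simpa using hφ, fun e => ?_⟩
  exact ((WeakDual.eval_continuous e).tendsto φ).comp hlim

section Gnorm

variable {X : Type v} {Y : Type w} [NormedAddCommGroup X] [NormedSpace 𝕜 X]
  [NormedAddCommGroup Y] [NormedSpace 𝕜 Y] {G T : X →L[𝕜] Y}

theorem le_Gnorm {a : ℝ}
    (h : ∀ δ > 0, ∀ c < a, ∃ x : X, ‖x‖ = 1 ∧ 1 - δ < ‖G x‖ ∧ c < ‖T x‖) : a ≤ Gnorm G T := by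
  have : Nonempty {δ : ℝ // 0 < δ} := ⟨⟨1, one_pos⟩⟩
  refine le_ciInf fun δ => le_of_forall_lt fun c hc => ?_
  obtain ⟨x, hx, hGx, hTx⟩ := h δ δ.2 c hc
  refine hTx.trans_le (le_csSup ⟨‖T‖, ?_⟩ ⟨x, hx, hGx, rfl⟩)
  rintro _ ⟨x', hx', -, rfl⟩
  simpa [hx'] using T.le_opNorm x'

theorem exists_lt_norm_apply_of_lt_Gnorm (hG : 1 ≤ ‖G‖) {δ c : ℝ} (hδ : 0 < δ)
    (hc : c < Gnorm G T) : ∃ x : X, ‖x‖ = 1 ∧ 1 - δ < ‖G x‖ ∧ c < ‖T x‖ := by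
  obtain ⟨x₀, hx₀, hGx₀⟩ :=
    G.exists_norm_eq_one_lt_norm_apply (by linarith) (r := 1 - δ) (by linarith)
  have hsup : Gnorm G T ≤ sSup {r : ℝ | ∃ x : X, ‖x‖ = 1 ∧ 1 - δ < ‖G x‖ ∧ r = ‖T x‖} := by
    refine ciInf_le ⟨0, ?_⟩ (⟨δ, hδ⟩ : {δ : ℝ // 0 < δ})
    rintro _ ⟨δ', rfl⟩
    exact Real.sSup_nonneg (by rintro _ ⟨x, -, -, rfl⟩; exact norm_nonneg _)
  obtain ⟨_, ⟨x, hx, hGx, rfl⟩, hcx⟩ :=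
    exists_lt_of_lt_csSup (by exact ⟨_, x₀, hx₀, hGx₀, rfl⟩) (hc.trans_le hsup)
  exact ⟨x, hx, hGx, hcx⟩

end Gnorm

section Cset

variable {X : Type v} {Y : Type w} [NormedAddCommGroup X] [NormedSpace 𝕜 X]
  [NormedAddCommGroup Y] [NormedSpace 𝕜 Y] {G : X →L[𝕜] Y}

theorem norm_apply_le_Gnorm_of_mem_Cset {ψ : (X →L[𝕜] Y) →L[𝕜] 𝕜} (hψ : ψ ∈ Cset G)
    (T : X →L[𝕜] Y) : ‖ψ T‖ ≤ Gnorm G T := by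
  obtain ⟨-, ι, l, hl, x, y, hx, hy, hGx, hlim⟩ := hψ
  refine le_Gnorm fun δ hδ c hc => ?_
  obtain ⟨i, hGi, hci⟩ := ((hGx.eventually (lt_mem_nhds (by linarith : 1 - δ < 1))).and
    ((hlim T).norm.eventually (lt_mem_nhds hc))).exists
  refine ⟨x i, hx i, hGi, hci.trans_le ?_⟩
  simpa [hy i] using (y i).le_opNorm (T (x i))

theorem exists_mem_Cset_tendsto {x : ℕ → X} {y : ℕ → StrongDual 𝕜 Y} (hx : ∀ n, ‖x n‖ = 1)
    (hy : ∀ n, ‖y n‖ = 1) (hGx : Tendsto (fun n => ‖G (x n)‖) atTop (𝓝 1)) :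
    ∃ ψ ∈ Cset G, ∃ l : Ultrafilter ℕ,
      ∀ S : X →L[𝕜] Y, Tendsto (fun n => y n (S (x n))) l (𝓝 (ψ S)) := by
  let l := Ultrafilter.of (atTop : Filter ℕ)
  obtain ⟨ψ, hψ, hlim⟩ := StrongDual.exists_tendsto_apply_of_norm_le l
    (f := fun n => (y n).comp (ContinuousLinearMap.apply 𝕜 Y (x n))) (r := 1) fun n => by
      refine ContinuousLinearMap.opNorm_le_bound _ zero_le_one fun S => ?_
      calc ‖y n (S (x n))‖ ≤ ‖S (x n)‖ := by simpa [hy n] using (y n).le_opNorm (S (x n))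
        _ ≤ 1 * ‖S‖ := by simpa [hx n] using S.le_opNorm (x n)
  refine ⟨ψ, ⟨hψ, ULift ℕ, (l : Filter ℕ).map ULift.up, inferInstance, fun i => x i.down,
    fun i => y i.down, fun i => hx _, fun i => hy _,
    tendsto_map'_iff.2 (hGx.mono_left (Ultrafilter.of_le _)),
    fun S => tendsto_map'_iff.2 (hlim S)⟩, l, hlim⟩

theorem exists_mem_Cset_le_re (hG : ‖G‖ = 1) (T : X →L[𝕜] Y) {c : ℝ} (hc : c < Gnorm G T) :
    ∃ ψ ∈ Cset G, c ≤ RCLike.re (ψ T) := by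
  have : Nontrivial Y := by
    by_contra hY
    have : Subsingleton Y := not_nontrivial_iff_subsingleton.1 hY
    simp [Subsingleton.elim G 0] at hG
  choose x hx hGx hTx using fun n : ℕ =>
    exists_lt_norm_apply_of_lt_Gnorm hG.ge (Nat.one_div_pos_of_nat (n := n)) hc
  choose y hy hyT using fun n => exists_dual_vector' 𝕜 (T (x n))
  have hGx_lim : Tendsto (fun n => ‖G (x n)‖) atTop (𝓝 1) := by
    refine tendsto_of_tendsto_of_tendsto_of_le_of_le ?_ tendsto_const_nhds (fun n => (hGx n).le)
      fun n => by simpa [hG, hx n] using G.le_opNorm (x n)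
    simpa using tendsto_const_nhds.sub (tendsto_one_div_add_atTop_nhds_zero_nat (𝕜 := ℝ))
  obtain ⟨ψ, hψ, l, hlim⟩ := exists_mem_Cset_tendsto hx hy hGx_lim
  refine ⟨ψ, hψ, ge_of_tendsto ((RCLike.continuous_re.tendsto _).comp (hlim T)) ?_⟩
  exact Eventually.of_forall fun n => by simpa [hyT n] using (hTx n).le

end Cset

theorem stmt_13_general {X : Type v} {Y : Type w}
    [NormedAddCommGroup X] [NormedSpace 𝕜 X]
    [NormedAddCommGroup Y] [NormedSpace 𝕜 Y]
    (G : X →L[𝕜] Y) (hG : ‖G‖ = 1) :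
    StrongDual.toWeakDual ''
        {φ : (X →L[𝕜] Y) →L[𝕜] 𝕜 | ∀ T : X →L[𝕜] Y, ‖φ T‖ ≤ Gnorm G T}
      = closure (StrongDual.toWeakDual '' (convexHull ℝ (Cset G))) := by
  have hhull : StrongDual.toWeakDual '' convexHull ℝ (Cset G) =
      convexHull ℝ (StrongDual.toWeakDual '' Cset G) :=
    LinearMap.image_convexHull (StrongDual.toWeakDual.toLinearMap.restrictScalars ℝ) _
  rw [hhull, WeakDual.closure_convexHull_eq_setOf_norm_apply_le (p := Gnorm G)]
  · exact StrongDual.toWeakDual.image_eq_preimage_symm _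
  · exact Set.forall_mem_image.2 fun ψ hψ => norm_apply_le_Gnorm_of_mem_Cset hψ
  · intro T c hc
    obtain ⟨ψ, hψ, hcψ⟩ := exists_mem_Cset_le_re hG T hc
    exact ⟨_, Set.mem_image_of_mem _ hψ, hcψ⟩

/-- The unit ball of the dual of `(L(X,Y), ‖·‖_G)` is the weak*-closed convex hull of `C`
(the closure being taken in the weak* topology of `L(X,Y)*`). -/
theorem stmt_13 {X : Type v} {Y : Type w}
    [NormedAddCommGroup X] [NormedSpace 𝕜 X] [CompleteSpace X]
    [NormedAddCommGroup Y] [NormedSpace 𝕜 Y] [CompleteSpace Y]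
    (G : X →L[𝕜] Y) (hG : ‖G‖ = 1)
    (hGnorm : ∀ T : X →L[𝕜] Y, Gnorm G T = 0 → T = 0) :
    StrongDual.toWeakDual ''
        {φ : (X →L[𝕜] Y) →L[𝕜] 𝕜 | ∀ T : X →L[𝕜] Y, ‖φ T‖ ≤ Gnorm G T}
      = closure (StrongDual.toWeakDual '' (convexHull ℝ (Cset G))) :=
  stmt_13_general G hG
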